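/- arXiv:1911.01575 — 7 statements merged into one kernel-verified Lean document; each statement's English description precedes it below -/
import Mathlib

section
/- Let F: ℝ^d → ℝ be convex and differentiable, let y ∈ ℝ^d, r > 0, and let x* minimize F(x) subject to ‖x − y‖₂ ≤ r. If the unconstrained minimizer of F lies outside the closed ball B(r,y), then x* also minimizes the penalized function x ↦ F(x) + (‖∇F(x*)‖₂/(2r))·‖x − y‖₂² over all of ℝ^d. -/
open Set

open scoped RealInnerProductSpace

/-- Subgradient inequality for a convex differentiable function. -/
lemma subgrad_aux {d : ℕ} {F : EuclideanSpace ℝ (Fin d) → ℝ}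
    (hconv : ConvexOn ℝ Set.univ F) {g a : EuclideanSpace ℝ (Fin d)}
    (hg : HasGradientAt F g a) (z : EuclideanSpace ℝ (Fin d)) :
    F a + ⟪g, z - a⟫ ≤ F z := by
  have hline : ConvexOn ℝ Set.univ (F ∘ (AffineMap.lineMap a z : ℝ →ᵃ[ℝ] _)) := by
    have := hconv.comp_affineMap (AffineMap.lineMap a z : ℝ →ᵃ[ℝ] _)
    simpa using this
  have hderiv : HasDerivAt (F ∘ (AffineMap.lineMap a z : ℝ →ᵃ[ℝ] _)) ⟪g, z - a⟫ 0 := by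
    have hF : HasFDerivAt F (InnerProductSpace.toDual ℝ _ g) a :=
      (hasGradientAt_iff_hasFDerivAt).1 hg
    have hc : HasDerivAt (fun t : ℝ => (AffineMap.lineMap a z : ℝ →ᵃ[ℝ] _) t) (z - a) 0 := by
      simp only [AffineMap.coe_lineMap]
      have : HasDerivAt (fun t : ℝ => t • (z - a) +ᵥ a) ((1 : ℝ) • (z - a)) 0 := by
        exact ((hasDerivAt_id 0).smul_const (z - a)).add_const a
      simpa using this
    have hF' : HasFDerivAt F (InnerProductSpace.toDual ℝ _ g)
        ((AffineMap.lineMap a z : ℝ →ᵃ[ℝ] _) 0) := by simpa using hF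
    have := hF'.comp_hasDerivAt (0 : ℝ) (by simpa using hc)
    simpa [InnerProductSpace.toDual_apply_apply] using this
  have hs := hline.le_slope_of_hasDerivAt (Set.mem_univ (0 : ℝ)) (Set.mem_univ (1 : ℝ))
    zero_lt_one hderiv
  have h0 : (F ∘ (AffineMap.lineMap a z : ℝ →ᵃ[ℝ] _)) 0 = F a := by
    simp [AffineMap.lineMap_apply]
  have h1 : (F ∘ (AffineMap.lineMap a z : ℝ →ᵃ[ℝ] _)) 1 = F z := by
    simp [AffineMap.lineMap_apply]
  rw [slope_def_field] at hs
  rw [h0, h1] at hs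
  simp only [sub_zero, div_one] at hs
  linarith [hs]


/-- If the unconstrained minimizer of a convex differentiable `F` lies outside the closed
ball `B(r,y)`, then the minimizer `x*` of `F` over `B(r,y)` also minimizes the penalized
function `x ↦ F(x) + (‖∇F(x*)‖/(2r)) ‖x − y‖²` over all of `ℝ^d`. -/
theorem stmt_4 {d : ℕ} (F : EuclideanSpace ℝ (Fin d) → ℝ)
    (F' : EuclideanSpace ℝ (Fin d) → EuclideanSpace ℝ (Fin d))
    (hconv : ConvexOn ℝ Set.univ F) (hgrad : ∀ x, HasGradientAt F (F' x) x)
    (y : EuclideanSpace ℝ (Fin d)) (r : ℝ) (hr : 0 < r)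
    (xstar : EuclideanSpace ℝ (Fin d))
    (hmem : xstar ∈ Metric.closedBall y r)
    (hmin : IsMinOn F (Metric.closedBall y r) xstar)
    (hout : ∀ w, IsMinOn F Set.univ w → w ∉ Metric.closedBall y r) :
    IsMinOn (fun x => F x + (‖F' xstar‖ / (2 * r)) * ‖x - y‖ ^ 2) Set.univ xstar := by
  set g := F' xstar with hg
  -- first-order condition
  have hfoc : ∀ z ∈ Metric.closedBall y r, 0 ≤ ⟪g, z - xstar⟫ := by
    intro z hz
    have htc : z - xstar ∈ posTangentConeAt (Metric.closedBall y r) xstar :=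
      sub_mem_posTangentConeAt_of_segment_subset
        ((convex_closedBall y r).segment_subset hmem hz)
    have hF : HasFDerivWithinAt F (InnerProductSpace.toDual ℝ _ g) (Metric.closedBall y r) xstar :=
      ((hasGradientAt_iff_hasFDerivAt).1 (hgrad xstar)).hasFDerivWithinAt
    have := hmin.localize.hasFDerivWithinAt_nonneg hF htc
    simpa [InnerProductSpace.toDual_apply_apply] using this
  -- key inequality
  have hkey : r * ‖g‖ ≤ ⟪g, y - xstar⟫ := by
    rcases eq_or_ne g 0 with h0 | h0
    · simp [h0]
    · have hzmem : y - (r / ‖g‖) • g ∈ Metric.closedBall y r := by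
        simp only [Metric.mem_closedBall, dist_eq_norm]
        rw [sub_sub_cancel_left, norm_neg, norm_smul]
        rw [Real.norm_eq_abs, abs_of_nonneg (by positivity)]
        rw [div_mul_cancel₀ _ (norm_ne_zero_iff.2 h0)]
      have := hfoc _ hzmem
      have hexp : ⟪g, y - (r / ‖g‖) • g - xstar⟫
          = ⟪g, y - xstar⟫ - (r / ‖g‖) * ⟪g, g⟫ := by
        rw [show y - (r / ‖g‖) • g - xstar = (y - xstar) - (r / ‖g‖) • g by abel]
        rw [inner_sub_right, real_inner_smul_right]
      rw [hexp, real_inner_self_eq_norm_sq] at this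
      have hng : (0:ℝ) < ‖g‖ := norm_pos_iff.2 h0
      have : r / ‖g‖ * ‖g‖ ^ 2 = r * ‖g‖ := by field_simp
      nlinarith [hfoc _ hzmem, hexp]
  rw [isMinOn_iff]
  intro x _
  have hsub := subgrad_aux hconv (hgrad xstar) x
  have hcs : -(‖g‖ * ‖x - y‖) ≤ ⟪g, x - y⟫ := by
    have h1 := abs_real_inner_le_norm g (x - y)
    have h2 := neg_abs_le (⟪g, x - y⟫ : ℝ)
    linarith
  have hsplit : ⟪g, x - xstar⟫ = ⟪g, x - y⟫ + ⟪g, y - xstar⟫ := by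
    rw [← inner_add_right]
    congr 1
    abel
  have hxs : ‖xstar - y‖ ≤ r := by
    rw [← dist_eq_norm]
    exact Metric.mem_closedBall.1 hmem
  set t := ‖x - y‖ with ht
  set s := ‖xstar - y‖ with hs
  have hts : 0 ≤ t := norm_nonneg _
  have hss : 0 ≤ s := norm_nonneg _
  have hlam : 0 ≤ ‖g‖ / (2 * r) := by positivity
  have hlamr : ‖g‖ / (2 * r) * (2 * r) = ‖g‖ := by field_simp
  nlinarith [mul_nonneg hlam (sq_nonneg (t - r)), mul_nonneg hlam (mul_nonneg (sub_nonneg.2 hxs) (add_nonneg hss (le_of_lt hr))), sq_nonneg (t - r), hkey, hcs, hsub, hsplit]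
end

section
/- Let F: ℝ^d → ℝ be μ-strongly convex and differentiable, λ > 0, y ∈ ℝ^d, and let x*_{λ,y} be the minimizer of F_{λ,y}(x) = F(x) + λ‖x − y‖₂². Then ‖∇F(x*_{λ,y})‖₂ ≤ (2λ/(μ + 2λ)) ‖∇F(y)‖₂. -/
/-!
At the proximal point the optimality condition reads `∇F(x*) = 2λ (y - x*)`, so
`‖∇F(x*)‖ = 2λ ‖y - x*‖`. Strong monotonicity of `∇F` (from strong convexity) applied to `y`
and `x*` gives `⟪∇F(y), y - x*⟫ ≥ (μ + 2λ) ‖y - x*‖²`, hence by Cauchy–Schwarz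
`(μ + 2λ) ‖y - x*‖ ≤ ‖∇F(y)‖`.
-/

open scoped RealInnerProductSpace

section

variable {E : Type*} [NormedAddCommGroup E] [InnerProductSpace ℝ E]

theorem IsLocalMin.hasGradientAt_eq_zero [CompleteSpace E] {f : E → ℝ} {g x : E}
    (h : IsLocalMin f x) (hf : HasGradientAt f g x) : g = 0 :=
  (InnerProductSpace.toDual ℝ E).map_eq_zero_iff.mp (h.hasFDerivAt_eq_zero hf.hasFDerivAt)

theorem HasGradientAt.add_mul_norm_sub_sq [CompleteSpace E] {F : E → ℝ} {g x : E}
    (hF : HasGradientAt F g x) (lam : ℝ) (y : E) :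
    HasGradientAt (fun z => F z + lam * ‖z - y‖ ^ 2) (g + (2 * lam) • (x - y)) x := by
  rw [hasGradientAt_iff_hasFDerivAt]
  refine (hF.hasFDerivAt.add (((hasFDerivAt_sub_const y).norm_sq).const_mul lam)).congr_fderiv ?_
  ext v
  simp
  ring

theorem eq_smul_sub_of_isMinOn_add_mul_norm_sub_sq [CompleteSpace E] {F : E → ℝ} {g y xs : E}
    {lam : ℝ} (hF : HasGradientAt F g xs)
    (hmin : IsMinOn (fun x => F x + lam * ‖x - y‖ ^ 2) Set.univ xs) :
    g = (2 * lam) • (y - xs) := by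
  have hzero :=
    (hmin.isLocalMin Filter.univ_mem).hasGradientAt_eq_zero (hF.add_mul_norm_sub_sq lam y)
  rwa [← neg_sub y xs, smul_neg, ← sub_eq_add_neg, sub_eq_zero] at hzero

theorem mul_norm_sub_sq_le_inner_sub_of_strongConvex {F : E → ℝ} {F' : E → E} {μ : ℝ}
    (hsc : ∀ x z, F x + ⟪F' x, z - x⟫ + μ / 2 * ‖z - x‖ ^ 2 ≤ F z) (x z : E) :
    μ * ‖x - z‖ ^ 2 ≤ ⟪F' x - F' z, x - z⟫ := by
  have hxz := hsc x z
  have hzx := hsc z x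
  rw [← neg_sub x z, inner_neg_right, norm_neg] at hxz
  rw [inner_sub_left]
  linarith

theorem mul_norm_le_norm_of_mul_norm_sq_le_inner {c : ℝ} {u v : E}
    (h : c * ‖v‖ ^ 2 ≤ ⟪u, v⟫) : c * ‖v‖ ≤ ‖u‖ := by
  rcases (norm_nonneg v).eq_or_lt with hv | hv
  · rw [← hv, mul_zero]
    exact norm_nonneg u
  · refine le_of_mul_le_mul_right ?_ hv
    calc c * ‖v‖ * ‖v‖ = c * ‖v‖ ^ 2 := by ring
      _ ≤ ⟪u, v⟫ := h
      _ ≤ ‖u‖ * ‖v‖ := real_inner_le_norm u v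

end

/-- For a μ-strongly convex differentiable `F`, the gradient of `F` at the minimizer of
the proximal function `F(x) + λ‖x − y‖²` satisfies
`‖∇F(x*_{λ,y})‖ ≤ (2λ/(μ + 2λ)) ‖∇F(y)‖`. -/
theorem stmt_6 {d : ℕ} (F : EuclideanSpace ℝ (Fin d) → ℝ)
    (F' : EuclideanSpace ℝ (Fin d) → EuclideanSpace ℝ (Fin d))
    (hgrad : ∀ x, HasGradientAt F (F' x) x) (μ : ℝ) (hμ : 0 < μ)
    (hsc : ∀ x z : EuclideanSpace ℝ (Fin d),
      F x + ⟪F' x, z - x⟫ + μ / 2 * ‖z - x‖ ^ 2 ≤ F z)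
    (lam : ℝ) (hlam : 0 < lam) (y xs : EuclideanSpace ℝ (Fin d))
    (hmin : IsMinOn (fun x => F x + lam * ‖x - y‖ ^ 2) Set.univ xs) :
    ‖F' xs‖ ≤ (2 * lam / (μ + 2 * lam)) * ‖F' y‖ := by
  have hopt : F' xs = (2 * lam) • (y - xs) :=
    eq_smul_sub_of_isMinOn_add_mul_norm_sub_sq (hgrad xs) hmin
  have hnorm : ‖F' xs‖ = 2 * lam * ‖y - xs‖ := by
    rw [hopt, norm_smul, Real.norm_of_nonneg (by positivity)]
  have hdist : (μ + 2 * lam) * ‖y - xs‖ ≤ ‖F' y‖ := by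
    refine mul_norm_le_norm_of_mul_norm_sq_le_inner ?_
    have hmono := mul_norm_sub_sq_le_inner_sub_of_strongConvex hsc y xs
    rw [hopt, inner_sub_left, real_inner_smul_left, real_inner_self_eq_norm_sq] at hmono
    linarith
  rw [hnorm, div_mul_eq_mul_div, le_div_iff₀ (by positivity), mul_assoc]
  exact mul_le_mul_of_nonneg_left (by linarith) (by positivity)
end

section
/- Let F: ℝ^d → ℝ be μ-strongly convex with minimizer x* and minimum value F*. For any y ∈ ℝ^d and λ ≥ 0, letting F*_{λ,y} = min_x [F(x) + λ‖x−y‖₂²] and x*_{λ,y} its minimizer, we have F(x*_{λ,y}) − F* ≤ F*_{λ,y} − F* ≤ (2λ/(μ + 2λ)) (F(y) − F*). -/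
/-- Frostig et al.'s lemma: for μ-strongly convex `F` with minimum `F*`,
`F(x*_{λ,y}) − F* ≤ F*_{λ,y} − F* ≤ (2λ/(μ + 2λ)) (F(y) − F*)`. -/
theorem stmt_7 {d : ℕ} (F : EuclideanSpace ℝ (Fin d) → ℝ) (μ : ℝ) (hμ : 0 < μ)
    (hF : StrongConvexOn Set.univ μ F) (y : EuclideanSpace ℝ (Fin d))
    (lam : ℝ) (hlam : 0 ≤ lam) (xstar xly : EuclideanSpace ℝ (Fin d))
    (hxstar : IsMinOn F Set.univ xstar)
    (hxly : IsMinOn (fun x => F x + lam * ‖x - y‖ ^ 2) Set.univ xly) :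
    F xly - F xstar ≤ (F xly + lam * ‖xly - y‖ ^ 2) - F xstar ∧
      (F xly + lam * ‖xly - y‖ ^ 2) - F xstar ≤
        (2 * lam / (μ + 2 * lam)) * (F y - F xstar) := by
  have hs : (0:ℝ) < μ + 2 * lam := by linarith
  set t : ℝ := μ / (μ + 2 * lam) with ht_def
  have ht0 : 0 ≤ t := by positivity
  have ht1 : t ≤ 1 := by
    rw [ht_def, div_le_one hs]; linarith
  have hsum : t + (1 - t) = 1 := by ring
  have hconv := hF.2 (Set.mem_univ xstar) (Set.mem_univ y) ht0 (by linarith) hsum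
  set z := t • xstar + (1 - t) • y with hz
  have hzy : z - y = t • (xstar - y) := by
    rw [hz]; module
  have hnz : ‖z - y‖ ^ 2 = t ^ 2 * ‖xstar - y‖ ^ 2 := by
    rw [hzy, norm_smul, mul_pow, Real.norm_eq_abs, sq_abs]
  have hmin := isMinOn_iff.mp hxly z (Set.mem_univ z)
  have hstar := isMinOn_iff.mp hxstar y (Set.mem_univ y)
  simp only [smul_eq_mul] at hconv
  have hkey : lam * t ^ 2 - t * (1 - t) * (μ / 2) = 0 := by
    rw [ht_def]; field_simp; ring
  have h2 : 1 - t = 2 * lam / (μ + 2 * lam) := by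
    rw [ht_def]; field_simp; ring
  constructor
  · nlinarith [sq_nonneg ‖xly - y‖]
  · rw [← h2]
    nlinarith [sq_nonneg ‖xstar - y‖]
end

section
/- Let F: ℝ^d → ℝ⁺ be μ-strongly convex with minimum F* ≥ 0. Let λ > 0, ε ∈ (0, 1/2], y ∈ ℝ^d, and let x satisfy F_{λ,y}(x) ≤ (1 + ε) min_z F_{λ,y}(z), where F_{λ,y}(z) = F(z) + λ‖z − y‖₂². Then F(x) − F* ≤ (1/(1−ε)) · (2λ/(μ + 2λ)) · (F(y) − F*) + (ε/(1−ε)) F*. -/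
/-!
Frostig's lemma: compare the proximal minimum with the point `z = t x* + (1 - t) y`,
`t = μ / (μ + 2λ)`. Strong convexity along the segment gains `μ/2 · t(1 - t)‖x* - y‖²`, which
exactly pays for the proximal term `λ t²‖x* - y‖²`, so the proximal value is at most
`F* + 2λ/(μ + 2λ) (F y - F*)`. The oracle bound then gives `F x ≤ (1 + ε)` times this, and
`1 + ε ≤ 1/(1 - ε)`.
-/

open Set

section Prox

variable {E : Type*} [NormedAddCommGroup E] [NormedSpace ℝ E] {F : E → ℝ} {μ lam : ℝ}

theorem StrongConvexOn.isMinOn_add_sq_norm_sub_le (hF : StrongConvexOn univ μ F) (hμ : 0 ≤ μ)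
    (hlam : 0 < lam) {y xm : E} (hxm : IsMinOn (fun z => F z + lam * ‖z - y‖ ^ 2) univ xm)
    (x : E) : F xm + lam * ‖xm - y‖ ^ 2 ≤ F x + 2 * lam / (μ + 2 * lam) * (F y - F x) := by
  have hden : 0 < μ + 2 * lam := by linarith
  set t := μ / (μ + 2 * lam) with ht
  have ht0 : 0 ≤ t := by positivity
  have ht1 : 0 ≤ 1 - t := by rw [sub_nonneg, ht, div_le_one hden]; linarith
  set z := t • x + (1 - t) • y
  have hz : ‖z - y‖ = t * ‖x - y‖ := by
    rw [show z - y = t • (x - y) by module, norm_smul, Real.norm_of_nonneg ht0]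
  have hconv : F z ≤ t * F x + (1 - t) * F y - μ / 2 * t * (1 - t) * ‖x - y‖ ^ 2 := by
    have := hF.2 (mem_univ x) (mem_univ y) ht0 ht1 (by ring)
    simp only [smul_eq_mul] at this
    linarith
  have hcancel : lam * t ^ 2 = μ / 2 * t * (1 - t) := by
    rw [ht]; field_simp; ring
  calc F xm + lam * ‖xm - y‖ ^ 2 ≤ F z + lam * ‖z - y‖ ^ 2 := hxm (mem_univ z)
    _ ≤ t * F x + (1 - t) * F y := by rw [hz, mul_pow, ← mul_assoc, hcancel]; linarith
    _ = F x + 2 * lam / (μ + 2 * lam) * (F y - F x) := by rw [ht]; field_simp; ring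

end Prox

theorem sub_le_of_le_one_add_mul_add {a s c D ε : ℝ} (hs : 0 ≤ s) (hcD : 0 ≤ c * D)
    (hε : ε < 1) (h : a ≤ (1 + ε) * (s + c * D)) :
    a - s ≤ 1 / (1 - ε) * c * D + ε / (1 - ε) * s := by
  have h1ε : 0 < 1 - ε := by linarith
  rw [mul_assoc, div_mul_eq_mul_div, div_mul_eq_mul_div, one_mul, ← add_div,
    le_div_iff₀ h1ε]
  nlinarith [mul_nonneg (sq_nonneg ε) hs, mul_nonneg (sq_nonneg ε) hcD]

/-- One step of the approximate proximal point method with a multiplicative ε-oracle: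
if `F_{λ,y}(x) ≤ (1+ε) min_z F_{λ,y}(z)` then
`F(x) − F* ≤ (1/(1−ε)) (2λ/(μ+2λ)) (F(y) − F*) + (ε/(1−ε)) F*`. -/
theorem stmt_8 {d : ℕ} (F : EuclideanSpace ℝ (Fin d) → ℝ) (μ : ℝ) (hμ : 0 < μ)
    (hF : StrongConvexOn Set.univ μ F) (hFnn : ∀ x, 0 ≤ F x)
    (xstar : EuclideanSpace ℝ (Fin d)) (hxstar : IsMinOn F Set.univ xstar)
    (lam ε : ℝ) (hlam : 0 < lam) (hε : 0 < ε) (hε' : ε ≤ 1 / 2)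
    (y xm x : EuclideanSpace ℝ (Fin d))
    (hxm : IsMinOn (fun z => F z + lam * ‖z - y‖ ^ 2) Set.univ xm)
    (horacle : F x + lam * ‖x - y‖ ^ 2 ≤ (1 + ε) * (F xm + lam * ‖xm - y‖ ^ 2)) :
    F x - F xstar ≤
      (1 / (1 - ε)) * (2 * lam / (μ + 2 * lam)) * (F y - F xstar) +
        (ε / (1 - ε)) * F xstar := by
  have hfrostig := hF.isMinOn_add_sq_norm_sub_le hμ.le hlam hxm xstar
  have hgap : 0 ≤ F y - F xstar := sub_nonneg.2 (hxstar (mem_univ y))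
  refine sub_le_of_le_one_add_mul_add (hFnn xstar) (by positivity) (by linarith) ?_
  calc F x ≤ F x + lam * ‖x - y‖ ^ 2 := le_add_of_nonneg_right (by positivity)
    _ ≤ (1 + ε) * (F xm + lam * ‖xm - y‖ ^ 2) := horacle
    _ ≤ (1 + ε) * (F xstar + 2 * lam / (μ + 2 * lam) * (F y - F xstar)) := by gcongr
end

section
/- Let F: ℝ^d → ℝ⁺ be μ-strongly convex with minimum F*. Given λ_1,…,λ_T > 0, ε_1,…,ε_T ∈ (0, 1/2], and a sequence x_0,…,x_T with F_{λ_t,x_{t−1}}(x_t) ≤ (1+ε_t) min_z F_{λ_t,x_{t−1}}(z) for each t, we have F(x_T) − F* ≤ ρ (F(x_0) − F*) + δ F*, where ρ = ∏_{t=1}^T (1+2ε_t)(2λ_t/(μ+2λ_t)) and δ = ∑_{t=1}^T 2ε_t ∏_{j=t+1}^T (1+2ε_j)(2λ_j/(μ+2λ_j)). -/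
open Finset

theorem one_step {d : ℕ} (F : EuclideanSpace ℝ (Fin d) → ℝ) (μ : ℝ) (hμ : 0 < μ)
    (hF : StrongConvexOn Set.univ μ F) (hFnn : ∀ x, 0 ≤ F x)
    (xstar : EuclideanSpace ℝ (Fin d)) (hxstar : IsMinOn F Set.univ xstar)
    (l e : ℝ) (hl : 0 < l) (he : 0 < e)
    (y w : EuclideanSpace ℝ (Fin d))
    (hor : ∀ z : EuclideanSpace ℝ (Fin d),
      F w + l * ‖w - y‖ ^ 2 ≤ (1 + e) * (F z + l * ‖z - y‖ ^ 2)) :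
    F w - F xstar ≤ (1 + 2 * e) * (2 * l / (μ + 2 * l)) * (F y - F xstar) + 2 * e * F xstar := by
  have hden : (0:ℝ) < μ + 2 * l := by linarith
  set α : ℝ := μ / (μ + 2 * l) with hα
  have hα0 : 0 ≤ α := by positivity
  have hα1 : α ≤ 1 := by rw [hα, div_le_one hden]; linarith
  have hβ : 1 - α = 2 * l / (μ + 2 * l) := by rw [hα]; field_simp; ring
  set z : EuclideanSpace ℝ (Fin d) := α • xstar + (1 - α) • y with hz
  have hconv := hF.2 (Set.mem_univ xstar) (Set.mem_univ y) hα0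
    (show (0:ℝ) ≤ 1 - α by linarith) (show α + (1 - α) = 1 by ring)
  simp only [smul_eq_mul] at hconv
  have hnorm : ‖z - y‖ = α * ‖xstar - y‖ := by
    have : z - y = α • (xstar - y) := by rw [hz]; module
    rw [this, norm_smul, Real.norm_eq_abs, abs_of_nonneg hα0]
  have hmin : F z + l * ‖z - y‖ ^ 2 ≤ α * F xstar + (1 - α) * F y := by
    have h1 : F z ≤ α * F xstar + (1 - α) * F y - α * (1 - α) * (μ / 2 * ‖xstar - y‖ ^ 2) := hconv
    have h2 : l * ‖z - y‖ ^ 2 = l * α ^ 2 * ‖xstar - y‖ ^ 2 := by rw [hnorm]; ring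
    have h3 : l * α ^ 2 - α * (1 - α) * (μ / 2) = 0 := by rw [hα]; field_simp; ring
    nlinarith [sq_nonneg ‖xstar - y‖]
  have hFw : F w ≤ (1 + e) * (α * F xstar + (1 - α) * F y) := by
    have := (hor z).trans
      (by nlinarith : (1 + e) * (F z + l * ‖z - y‖ ^ 2) ≤ (1 + e) * (α * F xstar + (1 - α) * F y))
    nlinarith [sq_nonneg ‖w - y‖]
  have hgap : 0 ≤ F y - F xstar := by
    have h := hxstar (Set.mem_univ y)
    simp only [Set.mem_setOf_eq] at h
    linarith
  have hFs : 0 ≤ F xstar := hFnn xstar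
  have hβ0 : 0 ≤ 1 - α := by linarith
  rw [← hβ]
  nlinarith [mul_nonneg (mul_nonneg he.le hβ0) hgap]

/-- Unrolled convergence of the approximate proximal point method with multiplicative
ε_t-oracles: `F(x_T) − F* ≤ ρ (F(x_0) − F*) + δ F*` with
`ρ = ∏ (1+2ε_t)(2λ_t/(μ+2λ_t))` and
`δ = ∑ 2ε_t ∏_{j>t} (1+2ε_j)(2λ_j/(μ+2λ_j))`. -/
theorem stmt_9 {d : ℕ} (T : ℕ) (F : EuclideanSpace ℝ (Fin d) → ℝ) (μ : ℝ) (hμ : 0 < μ)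
    (hF : StrongConvexOn Set.univ μ F) (hFnn : ∀ x, 0 ≤ F x)
    (xstar : EuclideanSpace ℝ (Fin d)) (hxstar : IsMinOn F Set.univ xstar)
    (lam ε : ℕ → ℝ) (x : ℕ → EuclideanSpace ℝ (Fin d))
    (hlam : ∀ t ∈ Finset.Icc 1 T, 0 < lam t)
    (hε : ∀ t ∈ Finset.Icc 1 T, 0 < ε t ∧ ε t ≤ 1 / 2)
    (horacle : ∀ t ∈ Finset.Icc 1 T, ∀ z : EuclideanSpace ℝ (Fin d),
      F (x t) + lam t * ‖x t - x (t - 1)‖ ^ 2 ≤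
        (1 + ε t) * (F z + lam t * ‖z - x (t - 1)‖ ^ 2)) :
    F (x T) - F xstar ≤
      (∏ t ∈ Finset.Icc 1 T, (1 + 2 * ε t) * (2 * lam t / (μ + 2 * lam t))) *
          (F (x 0) - F xstar) +
        (∑ t ∈ Finset.Icc 1 T, 2 * ε t *
          ∏ j ∈ Finset.Icc (t + 1) T, (1 + 2 * ε j) * (2 * lam j / (μ + 2 * lam j))) *
          F xstar := by
  set r : ℕ → ℝ := fun t => (1 + 2 * ε t) * (2 * lam t / (μ + 2 * lam t)) with hr
  have hFs : 0 ≤ F xstar := hFnn xstar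
  have key : ∀ n, n ≤ T →
      F (x n) - F xstar ≤
        (∏ t ∈ Finset.Icc 1 n, r t) * (F (x 0) - F xstar) +
        (∑ t ∈ Finset.Icc 1 n, 2 * ε t * ∏ j ∈ Finset.Icc (t + 1) n, r j) * F xstar := by
    intro n
    induction n with
    | zero => intro _; simp
    | succ n ih =>
      intro hn
      have hmem : n + 1 ∈ Finset.Icc 1 T := by simp [Nat.succ_le_of_lt]; omega
      have hprev := ih (by omega)
      have hstep := one_step F μ hμ hF hFnn xstar hxstar (lam (n+1)) (ε (n+1))
        (hlam _ hmem) (hε _ hmem).1 (x n) (x (n+1))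
        (by simpa using horacle _ hmem)
      have hr1 : 0 ≤ r (n+1) := by
        have h1 := hlam _ hmem
        have h2 := (hε _ hmem).1
        have : (0:ℝ) < μ + 2 * lam (n+1) := by linarith
        rw [hr]; positivity
      have hεnn : 0 ≤ 2 * ε (n+1) := by have := (hε _ hmem).1; linarith
      have hprodsucc : ∏ t ∈ Finset.Icc 1 (n+1), r t = (∏ t ∈ Finset.Icc 1 n, r t) * r (n+1) := by
        rw [← Finset.Ico_add_one_right_eq_Icc, ← Finset.Ico_add_one_right_eq_Icc, Finset.prod_Ico_succ_top (by omega)]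
      have hsumsucc : ∑ t ∈ Finset.Icc 1 (n+1), 2 * ε t * ∏ j ∈ Finset.Icc (t + 1) (n+1), r j =
          r (n+1) * (∑ t ∈ Finset.Icc 1 n, 2 * ε t * ∏ j ∈ Finset.Icc (t + 1) n, r j)
            + 2 * ε (n+1) := by
        rw [← Finset.Ico_add_one_right_eq_Icc, Finset.sum_Ico_succ_top (by omega)]
        have hcong : ∀ t ∈ Finset.Ico 1 (n+1),
            2 * ε t * ∏ j ∈ Finset.Icc (t + 1) (n+1), r j
              = r (n+1) * (2 * ε t * ∏ j ∈ Finset.Icc (t + 1) n, r j) := by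
          intro t ht
          simp only [Finset.mem_Ico] at ht
          rw [show Finset.Icc (t+1) (n+1) = Finset.Ico (t+1) (n+2) by
                rw [← Finset.Ico_add_one_right_eq_Icc]; rfl,
              Finset.prod_Ico_succ_top (by omega), Finset.Ico_add_one_right_eq_Icc]
          ring
        rw [Finset.sum_congr rfl hcong, ← Finset.mul_sum, Finset.Ico_add_one_right_eq_Icc]
        rw [show Finset.Icc (n+1+1) (n+1) = ∅ from Finset.Icc_eq_empty (by omega)]
        simp
      calc F (x (n+1)) - F xstar
          ≤ r (n+1) * (F (x n) - F xstar) + 2 * ε (n+1) * F xstar := hstep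
        _ ≤ r (n+1) * ((∏ t ∈ Finset.Icc 1 n, r t) * (F (x 0) - F xstar) +
              (∑ t ∈ Finset.Icc 1 n, 2 * ε t * ∏ j ∈ Finset.Icc (t + 1) n, r j) * F xstar)
              + 2 * ε (n+1) * F xstar := by
            gcongr
        _ = _ := by rw [hprodsucc, hsumsucc]; ring
  exact key T le_rfl
end

section
/- Let F be μ-strongly convex with F(x) ≥ 0, and suppose x_t approximately minimizes F_{λ_t,x_{t−1}} with multiplicative error ε_t ∈ (0,1). Then with r_t = ‖x_{t−1} − x*_{λ_t,x_{t−1}}‖₂ we have r_t − √(2ε_t F(x_{t−1})/(2λ_t+μ)) ≤ ‖x_t − x_{t−1}‖₂ ≤ √(2ε_t F(x_{t−1})/(2λ_t+μ)) + ‖∇F(x_{t−1})‖₂/(2λ_t+μ). -/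
/-!
At the exact minimizer `xs` of `F_{λ,y} = F + λ‖· - y‖²` the gradient `F' xs` equals
`-2λ (xs - y)`, so strong convexity of `F` makes `F_{λ,y}` grow at least like
`(λ + μ/2)‖· - xs‖²` away from `xs`. Applied at an approximate minimizer `x` this gives
`‖x - xs‖² ≤ 2ε F_{λ,y}(xs)/(2λ + μ) ≤ 2ε F(y)/(2λ + μ)`; applied at `y`, together with strong
convexity between `y` and `xs`, it gives the radius bound `‖xs - y‖ ≤ ‖F' y‖/(2λ + μ)`.
Both bounds on `‖x - y‖` are then triangle inequalities through `xs`.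
-/

open scoped RealInnerProductSpace

open Set

section ProximalPoint

variable {E : Type*} [NormedAddCommGroup E] [InnerProductSpace ℝ E] [CompleteSpace E]

/-- The proximal objective `F_{λ,y}`. -/
def proxObjective (F : E → ℝ) (lam : ℝ) (y z : E) : ℝ :=
  F z + lam * ‖z - y‖ ^ 2

variable {F : E → ℝ} {F' : E → E} {μ lam ε : ℝ} {y xs x : E}

theorem gradient_add_smul_eq_zero_of_isMinOn_proxObjective {g : E} (hF : HasGradientAt F g xs)
    (hmin : IsMinOn (proxObjective F lam y) univ xs) :
    g + (2 * lam) • (xs - y) = 0 := by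
  have hderiv := hF.hasFDerivAt.add
    ((((hasFDerivAt_id xs).sub_const y).norm_sq).const_mul lam)
  have hzero := (hmin.isLocalMin Filter.univ_mem).hasFDerivAt_eq_zero hderiv
  set w := g + (2 * lam) • (xs - y)
  have hw : ⟪w, w⟫ = 0 := by
    have := congrArg (fun L : E →L[ℝ] ℝ => L w) hzero
    simp only [add_apply, smul_apply, id_eq, Nat.cast_ofNat,
      ContinuousLinearMap.comp_apply, innerSL_apply_apply, ContinuousLinearMap.id_apply,
      InnerProductSpace.toDual_apply_apply, zero_apply, smul_eq_mul,
      nsmul_eq_mul] at this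
    rw [inner_add_left, real_inner_smul_left]
    linarith
  exact inner_self_eq_zero.mp hw

theorem proxObjective_add_sq_norm_sub_le (hgrad : ∀ z, HasGradientAt F (F' z) z)
    (hsc : ∀ a b, F a + ⟪F' a, b - a⟫ + μ / 2 * ‖b - a‖ ^ 2 ≤ F b)
    (hmin : IsMinOn (proxObjective F lam y) univ xs) (b : E) :
    proxObjective F lam y xs + (lam + μ / 2) * ‖b - xs‖ ^ 2 ≤ proxObjective F lam y b := by
  have hgrad_xs : F' xs = -((2 * lam) • (xs - y)) :=
    eq_neg_of_add_eq_zero_left (gradient_add_smul_eq_zero_of_isMinOn_proxObjective (hgrad xs) hmin)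
  have hexpand : ‖b - y‖ ^ 2 = ‖xs - y‖ ^ 2 + 2 * ⟪xs - y, b - xs⟫ + ‖b - xs‖ ^ 2 := by
    rw [← norm_add_sq_real, sub_add_sub_cancel']
  have hinner : ⟪F' xs, b - xs⟫ = -(2 * lam * ⟪xs - y, b - xs⟫) := by
    rw [hgrad_xs, inner_neg_left, real_inner_smul_left]
  have := hsc xs b
  unfold proxObjective
  rw [hexpand]
  linarith

theorem norm_sub_le_sqrt_of_proxObjective_le (hgrad : ∀ z, HasGradientAt F (F' z) z)
    (hsc : ∀ a b, F a + ⟪F' a, b - a⟫ + μ / 2 * ‖b - a‖ ^ 2 ≤ F b)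
    (hpos : 0 < 2 * lam + μ) (hε : 0 ≤ ε) (hmin : IsMinOn (proxObjective F lam y) univ xs)
    (happrox : proxObjective F lam y x ≤ (1 + ε) * proxObjective F lam y xs) :
    ‖x - xs‖ ≤ √(2 * ε * F y / (2 * lam + μ)) := by
  have hgrowth := proxObjective_add_sq_norm_sub_le hgrad hsc hmin x
  have hmin_le : proxObjective F lam y xs ≤ F y := by
    simpa [proxObjective] using hmin (mem_univ y)
  have hsq : (2 * lam + μ) * ‖x - xs‖ ^ 2 ≤ 2 * ε * F y := by
    linarith [mul_le_mul_of_nonneg_left hmin_le hε]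
  rw [← Real.sqrt_sq (norm_nonneg (x - xs))]
  exact Real.sqrt_le_sqrt ((le_div_iff₀ hpos).2 (by linarith))

theorem norm_sub_le_norm_gradient_div_of_isMinOn (hgrad : ∀ z, HasGradientAt F (F' z) z)
    (hsc : ∀ a b, F a + ⟪F' a, b - a⟫ + μ / 2 * ‖b - a‖ ^ 2 ≤ F b)
    (hpos : 0 < 2 * lam + μ) (hmin : IsMinOn (proxObjective F lam y) univ xs) :
    ‖xs - y‖ ≤ ‖F' y‖ / (2 * lam + μ) := by
  have hgrowth := proxObjective_add_sq_norm_sub_le hgrad hsc hmin y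
  simp only [proxObjective, sub_self, norm_zero, norm_sub_rev y xs] at hgrowth
  have hcs : -⟪F' y, xs - y⟫ ≤ ‖F' y‖ * ‖xs - y‖ :=
    (neg_le_abs _).trans (abs_real_inner_le_norm _ _)
  have hsq : (2 * lam + μ) * ‖xs - y‖ ^ 2 ≤ ‖F' y‖ * ‖xs - y‖ := by
    linarith [hsc y xs]
  rw [le_div_iff₀ hpos]
  nlinarith [norm_nonneg (xs - y), norm_nonneg (F' y)]

end ProximalPoint

theorem stmt_14_general {d : ℕ} (F : EuclideanSpace ℝ (Fin d) → ℝ)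
    (F' : EuclideanSpace ℝ (Fin d) → EuclideanSpace ℝ (Fin d))
    (hgrad : ∀ z, HasGradientAt F (F' z) z) (μ : ℝ) (hμ : 0 < μ)
    (hsc : ∀ a b : EuclideanSpace ℝ (Fin d),
      F a + ⟪F' a, b - a⟫ + μ / 2 * ‖b - a‖ ^ 2 ≤ F b)
    (lam ε : ℝ) (hlam : 0 < lam) (hε : 0 < ε)
    (y xs x : EuclideanSpace ℝ (Fin d))
    (hxs : IsMinOn (fun z => F z + lam * ‖z - y‖ ^ 2) Set.univ xs)
    (horacle : F x + lam * ‖x - y‖ ^ 2 ≤ (1 + ε) * (F xs + lam * ‖xs - y‖ ^ 2)) :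
    ‖y - xs‖ - Real.sqrt (2 * ε * F y / (2 * lam + μ)) ≤ ‖x - y‖ ∧
      ‖x - y‖ ≤ Real.sqrt (2 * ε * F y / (2 * lam + μ)) + ‖F' y‖ / (2 * lam + μ) := by
  have hpos : 0 < 2 * lam + μ := by linarith
  have hclose := norm_sub_le_sqrt_of_proxObjective_le hgrad hsc hpos hε.le hxs horacle
  have hradius := norm_sub_le_norm_gradient_div_of_isMinOn hgrad hsc hpos hxs
  constructor
  · have := norm_sub_le_norm_sub_add_norm_sub y x xs
    rw [norm_sub_rev y x] at this
    linarith
  · linarith [norm_sub_le_norm_sub_add_norm_sub x xs y]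

/-- Step-size bounds for the approximate proximal point method: if `x` is an
ε-multiplicative approximate minimizer of `F_{λ,y}` with exact minimizer `xs`,
and `r = ‖y − xs‖`, then
`r − √(2ε F(y)/(2λ+μ)) ≤ ‖x − y‖ ≤ √(2ε F(y)/(2λ+μ)) + ‖∇F(y)‖/(2λ+μ)`. -/
theorem stmt_14 {d : ℕ} (F : EuclideanSpace ℝ (Fin d) → ℝ)
    (F' : EuclideanSpace ℝ (Fin d) → EuclideanSpace ℝ (Fin d))
    (hgrad : ∀ z, HasGradientAt F (F' z) z) (μ : ℝ) (hμ : 0 < μ)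
    (hsc : ∀ a b : EuclideanSpace ℝ (Fin d),
      F a + ⟪F' a, b - a⟫ + μ / 2 * ‖b - a‖ ^ 2 ≤ F b)
    (hFnn : ∀ z, 0 ≤ F z)
    (lam ε : ℝ) (hlam : 0 < lam) (hε : 0 < ε) (hε' : ε < 1)
    (y xs x : EuclideanSpace ℝ (Fin d))
    (hxs : IsMinOn (fun z => F z + lam * ‖z - y‖ ^ 2) Set.univ xs)
    (horacle : F x + lam * ‖x - y‖ ^ 2 ≤ (1 + ε) * (F xs + lam * ‖xs - y‖ ^ 2)) :
    ‖y - xs‖ - Real.sqrt (2 * ε * F y / (2 * lam + μ)) ≤ ‖x - y‖ ∧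
      ‖x - y‖ ≤ Real.sqrt (2 * ε * F y / (2 * lam + μ)) + ‖F' y‖ / (2 * lam + μ) :=
  stmt_14_general F F' hgrad μ hμ hsc lam ε hlam hε y xs x hxs horacle
end

section
/- Let F̃ and F be nonnegative functions on a ball B(r,y) with |F(x) − F̃(x)| ≤ c‖x−y‖₂³ for all x ∈ B(r,y), where F(x) ≥ α > 0 and F(x) ≥ λ‖x−y‖₂² on B(r,y) for constants α, λ > 0. Let f, f̃ ≥ 0 satisfy f(x) ≤ f̃(x) + c_i‖x−y‖₂³ and F ≥ F̃ on B(r,y). Then sup_{x ∈ B(r,y)} f(x)/F(x) ≤ sup_{x ∈ B(r,y)} f̃(x)/F̃(x) + min(c_i r/λ, c_i r³/α). -/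
/-!
Since `F̃ ≤ F`, replacing `f` by its upper bound `f̃ + cᵢ s³` (with `s = ‖x - y‖`) gives
`f/F ≤ f̃/F̃ + cᵢ s³/F`. The error term is then controlled in two ways: `F ≥ λ s²` leaves
`cᵢ s/λ ≤ cᵢ r/λ`, and `F ≥ α` leaves `cᵢ s³/α ≤ cᵢ r³/α`.
-/

section OrderedField

variable {K : Type*} [Field K] [LinearOrder K] [IsStrictOrderedRing K]

theorem div_le_div_add_div_of_le_add {f g e F G : K} (hG : 0 < G) (hGF : G ≤ F)
    (hg : 0 ≤ g) (hf : f ≤ g + e) : f / F ≤ g / G + e / F := by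
  have hF : 0 < F := hG.trans_le hGF
  calc f / F ≤ (g + e) / F := div_le_div_of_nonneg_right hf hF.le
    _ = g / F + e / F := add_div g e F
    _ ≤ g / G + e / F := by gcongr

theorem mul_pow_three_div_le_of_sq_le {c s r lam F : K} (hc : 0 ≤ c) (hs : 0 ≤ s)
    (hsr : s ≤ r) (hlam : 0 < lam) (hF : 0 < F) (hsF : lam * s ^ 2 ≤ F) :
    c * s ^ 3 / F ≤ c * r / lam := by
  rw [div_le_div_iff₀ hF hlam]
  calc c * s ^ 3 * lam = c * s * (lam * s ^ 2) := by ring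
    _ ≤ c * r * F := by
      have hr : 0 ≤ r := hs.trans hsr
      gcongr

theorem mul_pow_three_div_le_of_le {c s r α F : K} (hc : 0 ≤ c) (hs : 0 ≤ s)
    (hsr : s ≤ r) (hα : 0 < α) (hαF : α ≤ F) :
    c * s ^ 3 / F ≤ c * r ^ 3 / α := by
  have hr : 0 ≤ r := hs.trans hsr
  gcongr

end OrderedField

theorem stmt_16_general {d : ℕ} (y : EuclideanSpace ℝ (Fin d)) (r : ℝ)
    (F Ft f ft : EuclideanSpace ℝ (Fin d) → ℝ) (ci α lam t : ℝ)
    (hα : 0 < α) (hlam : 0 < lam) (hci : 0 ≤ ci)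
    (hFα : ∀ x ∈ Metric.closedBall y r, α ≤ F x)
    (hFlam : ∀ x ∈ Metric.closedBall y r, lam * ‖x - y‖ ^ 2 ≤ F x)
    (hFtpos : ∀ x ∈ Metric.closedBall y r, 0 < Ft x)
    (hFFt : ∀ x ∈ Metric.closedBall y r, Ft x ≤ F x)
    (hftnn : ∀ x ∈ Metric.closedBall y r, 0 ≤ ft x)
    (hf : ∀ x ∈ Metric.closedBall y r, f x ≤ ft x + ci * ‖x - y‖ ^ 3)
    (ht : ∀ x ∈ Metric.closedBall y r, ft x / Ft x ≤ t) :
    ∀ x ∈ Metric.closedBall y r,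
      f x / F x ≤ t + min (ci * r / lam) (ci * r ^ 3 / α) := by
  intro x hx
  have hsr : ‖x - y‖ ≤ r := by rwa [Metric.mem_closedBall, dist_eq_norm] at hx
  have hF : 0 < F x := hα.trans_le (hFα x hx)
  calc f x / F x ≤ ft x / Ft x + ci * ‖x - y‖ ^ 3 / F x :=
        div_le_div_add_div_of_le_add (hFtpos x hx) (hFFt x hx) (hftnn x hx) (hf x hx)
    _ ≤ t + min (ci * r / lam) (ci * r ^ 3 / α) :=
        add_le_add (ht x hx) (le_min
          (mul_pow_three_div_le_of_sq_le hci (norm_nonneg _) hsr hlam hF (hFlam x hx))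
          (mul_pow_three_div_le_of_le hci (norm_nonneg _) hsr hα (hFα x hx)))

/-- Local sensitivity bound via quadratic approximation: if on the ball `B(r,y)` the
function `F` is within `c‖x−y‖³` of its approximation `F̃`, `F ≥ α > 0`,
`F ≥ λ‖x−y‖²`, `F ≥ F̃ > 0`, and a summand satisfies `f ≤ f̃ + cᵢ‖x−y‖³` with
`f, f̃ ≥ 0`, then any upper bound `t` on `f̃/F̃` over the ball yields
`f/F ≤ t + min(cᵢ r/λ, cᵢ r³/α)` over the ball. -/
theorem stmt_16 {d : ℕ} (y : EuclideanSpace ℝ (Fin d)) (r : ℝ) (hr : 0 < r)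
    (F Ft f ft : EuclideanSpace ℝ (Fin d) → ℝ) (c ci α lam t : ℝ)
    (hα : 0 < α) (hlam : 0 < lam) (hci : 0 ≤ ci)
    (happrox : ∀ x ∈ Metric.closedBall y r, |F x - Ft x| ≤ c * ‖x - y‖ ^ 3)
    (hFα : ∀ x ∈ Metric.closedBall y r, α ≤ F x)
    (hFlam : ∀ x ∈ Metric.closedBall y r, lam * ‖x - y‖ ^ 2 ≤ F x)
    (hFtpos : ∀ x ∈ Metric.closedBall y r, 0 < Ft x)
    (hFFt : ∀ x ∈ Metric.closedBall y r, Ft x ≤ F x)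
    (hfnn : ∀ x ∈ Metric.closedBall y r, 0 ≤ f x)
    (hftnn : ∀ x ∈ Metric.closedBall y r, 0 ≤ ft x)
    (hf : ∀ x ∈ Metric.closedBall y r, f x ≤ ft x + ci * ‖x - y‖ ^ 3)
    (ht : ∀ x ∈ Metric.closedBall y r, ft x / Ft x ≤ t) :
    ∀ x ∈ Metric.closedBall y r,
      f x / F x ≤ t + min (ci * r / lam) (ci * r ^ 3 / α) :=
  stmt_16_general y r F Ft f ft ci α lam t hα hlam hci hFα hFlam hFtpos hFFt hftnn hf ht
end
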